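/- arXiv:2003.09502 — 2 statements merged into one kernel-verified Lean document; each statement's English description precedes it below -/
import Mathlib

section
/- Let G be a finite group, ρ a finite-dimensional complex representation of G with character χ_ρ, and N = ker ρ = {g ∈ G : ρ(g) = id}. Let χ_i, χ_j be irreducible characters of G. If the restrictions of χ_i and χ_j to N are proportional, i.e., there exists c ∈ ℂ with χ_i(n) = c · χ_j(n) for all n ∈ N, then there exists a natural number L ≥ 0 such that ⟨χ_ρ^L · χ_i, χ_j⟩ ≥ 1, i.e., there is a walk from the vertex of χ_i to the vertex of χ_j in the McKay quiver. -/
open scoped ComplexOrder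

/-- A function `χ : G → ℂ` is an irreducible character of `G` if it is the character of
some simple (irreducible) finite-dimensional complex representation of `G`. -/
def IsIrrChar (G : Type) [Group G] (χ : G → ℂ) : Prop :=
  ∃ V : FDRep ℂ G, CategoryTheory.Simple V ∧ V.character = χ

/-- The standard inner product of complex-valued class functions on a finite group. -/
noncomputable def innChar (G : Type) [Group G] [Fintype G] (φ ψ : G → ℂ) : ℂ :=
  (Fintype.card G : ℂ)⁻¹ * ∑ g : G, φ g * (starRingEnd ℂ) (ψ g)

/-!
If every multiplicity `⟨χ_ρ^L χᵢ, χⱼ⟩` vanished, then `∑_g χ_ρ(g)^L χᵢ(g) conj χⱼ(g) = 0` for all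
`L`, hence `∑_g p(χ_ρ(g)) χᵢ(g) conj χⱼ(g) = 0` for every polynomial `p`. Choosing `p` to vanish on
all values of `χ_ρ` except `χ_ρ(1) = dim ρ` isolates the sum over the level set `χ_ρ = dim ρ`, which
is `ker ρ` because the eigenvalues of each `ρ(g)` are roots of unity. On `ker ρ` we have
`χᵢ = c χⱼ`, so that sum is `c ∑_{ker ρ} |χⱼ|²`, which is nonzero as `χᵢ(1) = dim χᵢ ≠ 0`.
-/

universe u

open Module Polynomial CategoryTheory MonoidalCategory

namespace Module.End

variable {W : Type u} [AddCommGroup W] [Module ℂ W] [FiniteDimensional ℂ W]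

theorem exists_basis_hasEigenvector_of_pow_eq_one (f : End ℂ W) {n : ℕ} (hn : n ≠ 0)
    (hf : f ^ n = 1) :
    ∃ (ι : Type u) (_ : Fintype ι) (b : Basis ι ℂ W) (μ : ι → ℂ),
      (∀ i, f.HasEigenvector (μ i) (b i)) ∧ ∀ i, μ i ^ n = 1 := by
  have hss : f.IsSemisimple := by
    refine isSemisimple_of_squarefree_aeval_eq_zero
      (Polynomial.separable_X_pow_sub_C 1 (by exact_mod_cast hn) one_ne_zero).squarefree ?_
    simp [hf]
  have hint : DirectSum.IsInternal f.eigenspace := by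
    refine DirectSum.isInternal_submodule_of_iSupIndep_of_iSup_eq_top ?_ ?_
    · simpa [← eigenspace_def] using f.independent_genEigenspace 1
    · simpa [hss.isFinitelySemisimple.maxGenEigenspace_eq_eigenspace] using
        iSup_maxGenEigenspace_eq_top f
  let b := hint.collectedBasis fun μ => Basis.ofVectorSpace ℂ (f.eigenspace μ)
  have hb : ∀ i, f.HasEigenvector i.1 (b i) := fun i => ⟨hint.collectedBasis_mem _ i, b.ne_zero i⟩
  refine ⟨_, FiniteDimensional.fintypeBasisIndex b, b, fun i => i.1, hb, fun i => ?_⟩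
  have h := (hb i).pow_apply n
  rw [hf, one_apply] at h
  exact smul_left_injective ℂ (b.ne_zero i) (by simpa using h.symm)

end Module.End

theorem LinearMap.trace_eq_sum_of_basis_hasEigenvector {W ι : Type*} [AddCommGroup W] [Module ℂ W]
    [Fintype ι] [DecidableEq ι] (b : Basis ι ℂ W) (f : End ℂ W) (μ : ι → ℂ)
    (hb : ∀ i, f.HasEigenvector (μ i) (b i)) :
    LinearMap.trace ℂ W f = ∑ i, μ i := by
  have hm : LinearMap.toMatrix b b f = Matrix.diagonal μ := by
    ext i j
    rw [LinearMap.toMatrix_apply, (hb j).apply_eq_smul, map_smul, Basis.repr_self]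
    by_cases h : i = j <;> simp [h]
  rw [LinearMap.trace_eq_matrix_trace ℂ b f, hm, Matrix.trace_diagonal]

theorem Complex.eq_one_of_sum_eq_card {ι : Type*} [Fintype ι] {μ : ι → ℂ}
    (hμ : ∀ i, ‖μ i‖ = 1) (h : ∑ i, μ i = Fintype.card ι) (i : ι) : μ i = 1 := by
  have hle : ∀ j ∈ Finset.univ, (μ j).re ≤ 1 := fun j _ => (hμ j) ▸ re_le_norm (μ j)
  have hsum : ∑ j, (μ j).re = ∑ _ : ι, (1 : ℝ) := by
    simpa [re_sum] using congrArg re h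
  have hre : (μ i).re = ‖μ i‖ := by
    rw [hμ i]; exact (Finset.sum_eq_sum_iff_of_le hle).mp hsum i (Finset.mem_univ i)
  rw [eq_coe_norm_of_nonneg (re_eq_norm.mp hre), hμ i, ofReal_one]

namespace FDRep

variable {G : Type} [Group G]

theorem exists_basis_hasEigenvector_norm_eq_one (V : FDRep ℂ G) {g : G} (hg : IsOfFinOrder g) :
    ∃ (ι : Type) (_ : Fintype ι) (b : Basis ι ℂ V) (μ : ι → ℂ),
      (∀ i, Module.End.HasEigenvector (V.ρ g) (μ i) (b i)) ∧ ∀ i, ‖μ i‖ = 1 := by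
  have hn := hg.orderOf_pos.ne'
  obtain ⟨ι, hι, b, μ, hb, hμ⟩ := Module.End.exists_basis_hasEigenvector_of_pow_eq_one (V.ρ g) hn
    (by rw [← map_pow, pow_orderOf_eq_one, map_one])
  exact ⟨ι, hι, b, μ, hb, fun i => Complex.norm_eq_one_of_pow_eq_one (hμ i) hn⟩

theorem star_character (V : FDRep ℂ G) {g : G} (hg : IsOfFinOrder g) :
    starRingEnd ℂ (V.character g) = V.character g⁻¹ := by
  classical
  obtain ⟨ι, _, b, μ, hb, hμ⟩ := exists_basis_hasEigenvector_norm_eq_one V hg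
  have hb' : ∀ i, Module.End.HasEigenvector (V.ρ g⁻¹) (starRingEnd ℂ (μ i)) (b i) := fun i => by
    refine ⟨Module.End.mem_eigenspace_iff.mpr ?_, b.ne_zero i⟩
    have hμ0 : μ i ≠ 0 := norm_ne_zero_iff.mp (by rw [hμ i]; exact one_ne_zero)
    rw [← Complex.inv_eq_conj (hμ i), eq_inv_smul_iff₀ hμ0, ← map_smul, ← (hb i).apply_eq_smul,
      ← Module.End.mul_apply, ← map_mul, inv_mul_cancel, map_one, Module.End.one_apply]
  rw [character, character, LinearMap.trace_eq_sum_of_basis_hasEigenvector b _ μ hb,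
    LinearMap.trace_eq_sum_of_basis_hasEigenvector b _ _ hb', map_sum]

theorem character_eq_finrank_iff (V : FDRep ℂ G) {g : G} (hg : IsOfFinOrder g) :
    V.character g = finrank ℂ V ↔ V.ρ g = 1 := by
  classical
  refine ⟨fun h => ?_, fun h => by rw [character, h, LinearMap.trace_one]⟩
  obtain ⟨ι, _, b, μ, hb, hμ⟩ := exists_basis_hasEigenvector_norm_eq_one V hg
  rw [character, LinearMap.trace_eq_sum_of_basis_hasEigenvector b _ μ hb,
    finrank_eq_card_basis b] at h
  refine b.ext fun i => ?_
  rw [(hb i).apply_eq_smul, Complex.eq_one_of_sum_eq_card hμ h i, one_smul, Module.End.one_apply]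

end FDRep

theorem FDRep.exists_character_eq_pow_mul {k G : Type u} [Field k] [Monoid G]
    (ρ V : FDRep k G) (L : ℕ) : ∃ W : FDRep k G, W.character = ρ.character ^ L * V.character := by
  induction L with
  | zero => exact ⟨V, by rw [pow_zero, one_mul]⟩
  | succ L ih =>
    obtain ⟨W, hW⟩ := ih
    exact ⟨ρ ⊗ W, by rw [FDRep.char_tensor, hW, pow_succ', mul_assoc]⟩

section InnerProduct

variable {G : Type} [Group G] [Fintype G]

theorem innChar_character_eq_finrank_hom (V W : FDRep ℂ G) :
    innChar G W.character V.character = finrank ℂ (V ⟶ W) := by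
  have : Invertible (Nat.card G : ℂ) :=
    invertibleOfNonzero (Nat.cast_ne_zero.mpr Nat.card_pos.ne')
  rw [← FDRep.scalar_product_char_eq_finrank_equivariant, innChar, Nat.card_eq_fintype_card]
  congr 1
  refine Finset.sum_congr rfl fun g _ => ?_
  rw [FDRep.star_character V (isOfFinOrder_of_finite g)]

theorem innChar_eq_zero_iff (φ ψ : G → ℂ) :
    innChar G φ ψ = 0 ↔ ∑ g, φ g * starRingEnd ℂ (ψ g) = 0 := by
  simp [innChar]

theorem FDRep.finrank_ne_zero_of_simple (V : FDRep ℂ G) [Simple V] : finrank ℂ V ≠ 0 := by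
  intro h
  have : Subsingleton V := finrank_zero_iff.mp h
  have hχ : V.character = 0 := funext fun g => by
    rw [character, Subsingleton.elim (V.ρ g) 0, map_zero, Pi.zero_apply]
  have hend := innChar_character_eq_finrank_hom V V
  rw [finrank_endomorphism_simple_eq_one, hχ] at hend
  simp [innChar] at hend

theorem exists_innChar_pow_mul_eq_natCast (ρ V W : FDRep ℂ G) (L : ℕ) :
    ∃ m : ℕ, innChar G (ρ.character ^ L * V.character) W.character = m := by
  obtain ⟨U, hU⟩ := FDRep.exists_character_eq_pow_mul ρ V L
  exact ⟨_, hU ▸ innChar_character_eq_finrank_hom W U⟩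

end InnerProduct

theorem Finset.sum_eval_mul_eq_zero_of_sum_pow_mul_eq_zero {α R : Type*} [CommRing R]
    {s : Finset α} {v w : α → R} (h : ∀ L : ℕ, ∑ a ∈ s, v a ^ L * w a = 0) (p : R[X]) :
    ∑ a ∈ s, p.eval (v a) * w a = 0 := by
  induction p using Polynomial.induction_on' with
  | add p q hp hq => simp only [eval_add, add_mul, Finset.sum_add_distrib, hp, hq, add_zero]
  | monomial n c => simp only [eval_monomial, mul_assoc, ← Finset.mul_sum, h, mul_zero]

theorem Finset.sum_filter_eq_zero_of_sum_pow_mul_eq_zero {α K : Type*} [Field K] [DecidableEq K]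
    {s : Finset α} {v w : α → K} (h : ∀ L : ℕ, ∑ a ∈ s, v a ^ L * w a = 0) (z : K) :
    ∑ a ∈ s with v a = z, w a = 0 := by
  set Q : K[X] := ∏ y ∈ (s.image v).erase z, (X - C y)
  have hQz : Q.eval z ≠ 0 := by
    simp only [Q, eval_prod, eval_sub, eval_X, eval_C]
    exact Finset.prod_ne_zero_iff.mpr fun y hy => sub_ne_zero.mpr (Finset.ne_of_mem_erase hy).symm
  have hQ : ∀ a ∈ s, v a ≠ z → Q.eval (v a) = 0 := fun a ha hne => by
    simp only [Q, eval_prod, eval_sub, eval_X, eval_C]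
    exact Finset.prod_eq_zero (Finset.mem_erase.mpr ⟨hne, Finset.mem_image_of_mem v ha⟩) (sub_self _)
  have key : Q.eval z * ∑ a ∈ s with v a = z, w a = 0 := by
    rw [← sum_eval_mul_eq_zero_of_sum_pow_mul_eq_zero h Q, Finset.mul_sum, Finset.sum_filter]
    refine Finset.sum_congr rfl fun a ha => ?_
    split_ifs with hz
    · rw [hz]
    · rw [hQ a ha hz, zero_mul]
  exact (mul_eq_zero.mp key).resolve_left hQz

theorem Finset.sum_mul_conj_ne_zero_of_eq_const_mul {α : Type*} {s : Finset α} {u v : α → ℂ}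
    {c : ℂ} {a : α} (ha : a ∈ s) (hu : u a ≠ 0) (huv : ∀ x ∈ s, u x = c * v x) :
    ∑ x ∈ s, u x * starRingEnd ℂ (v x) ≠ 0 := by
  obtain ⟨hc, hva⟩ := mul_ne_zero_iff.mp (huv a ha ▸ hu)
  have hpos : 0 < ∑ x ∈ s, Complex.normSq (v x) :=
    Finset.sum_pos' (fun x _ => Complex.normSq_nonneg _) ⟨a, ha, Complex.normSq_pos.mpr hva⟩
  calc ∑ x ∈ s, u x * starRingEnd ℂ (v x)
      = c * ((∑ x ∈ s, Complex.normSq (v x) : ℝ) : ℂ) := by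
        rw [Complex.ofReal_sum, Finset.mul_sum]
        refine Finset.sum_congr rfl fun x hx => ?_
        rw [huv x hx, mul_assoc, Complex.mul_conj]
    _ ≠ 0 := mul_ne_zero hc (Complex.ofReal_ne_zero.mpr hpos.ne')

/-- If the restrictions of the irreducible characters `χᵢ` and `χⱼ` to `N = ker ρ` are
proportional, then there is a walk from the vertex of `χᵢ` to the vertex of `χⱼ` in the
McKay quiver of `ρ`: there exists `L ≥ 0` with `⟨χ_ρ^L · χᵢ, χⱼ⟩ ≥ 1`. -/
theorem mckay_walk_of_proportional_restriction (G : Type) [Group G] [Fintype G]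
    (ρ : FDRep ℂ G) (χi χj : G → ℂ) (hχi : IsIrrChar G χi) (hχj : IsIrrChar G χj)
    (hprop : ∃ c : ℂ, ∀ n : G, ρ.ρ n = 1 → χi n = c * χj n) :
    ∃ L : ℕ, 1 ≤ innChar G (ρ.character ^ L * χi) χj := by
  classical
  obtain ⟨Vi, hsi, rfl⟩ := hχi
  obtain ⟨Vj, -, rfl⟩ := hχj
  obtain ⟨c, hc⟩ := hprop
  by_contra! hlt
  have hsum : ∀ L : ℕ,
      ∑ g, ρ.character g ^ L * (Vi.character g * starRingEnd ℂ (Vj.character g)) = 0 := by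
    intro L
    obtain ⟨m, hm⟩ := exists_innChar_pow_mul_eq_natCast ρ Vi Vj L
    have hm0 : m = 0 := by
      have hm1 : ¬1 ≤ m := by exact_mod_cast hm ▸ hlt L
      omega
    rw [hm0, Nat.cast_zero, innChar_eq_zero_iff] at hm
    simpa only [Pi.mul_apply, Pi.pow_apply, mul_assoc] using hm
  have hker : ∀ g, ρ.character g = ρ.character 1 ↔ ρ.ρ g = 1 := fun g => by
    rw [FDRep.char_one, FDRep.character_eq_finrank_iff ρ (isOfFinOrder_of_finite g)]
  have hvanish := Finset.sum_filter_eq_zero_of_sum_pow_mul_eq_zero hsum (ρ.character 1)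
  rw [Finset.filter_congr fun g _ => hker g] at hvanish
  have hdim : Vi.character 1 ≠ 0 := by
    rw [FDRep.char_one]
    exact_mod_cast FDRep.finrank_ne_zero_of_simple Vi
  exact Finset.sum_mul_conj_ne_zero_of_eq_const_mul (by simp) hdim
    (fun g hg => hc g (Finset.mem_filter.mp hg).2) hvanish
end

section
/- Let G be a finite group and ρ a finite-dimensional complex representation of G. Then every complex eigenvalue x of the McKay matrix A_ρ(G) (viewed as a matrix over ℂ) is solvable by radicals over ℚ; in particular, x lies in the cyclotomic field generated over ℚ by the |G|-th roots of unity, and the characteristic polynomial of A_ρ(G) is solvable by radicals. -/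
open Module Polynomial CategoryTheory Representation ComplexConjugate

namespace Module.End

variable {K V : Type*} [Field K] [AddCommGroup V] [Module K V]

theorem isSemisimple_of_pow_eq_one [CharZero K] {f : End K V} {n : ℕ} (hn : n ≠ 0)
    (hf : f ^ n = 1) : f.IsSemisimple :=
  isSemisimple_of_squarefree_aeval_eq_zero
    (separable_X_pow_sub_C 1 (Nat.cast_ne_zero.mpr hn) one_ne_zero).squarefree (by simp [hf])

theorem HasEigenvalue.pow_eq_one_of_pow_eq_one {f : End K V} {μ : K} (hμ : f.HasEigenvalue μ)
    {n : ℕ} (hf : f ^ n = 1) : μ ^ n = 1 := by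
  obtain ⟨v, hv⟩ := hμ.exists_hasEigenvector
  have hpow := hv.pow_apply n
  rw [hf, one_apply] at hpow
  exact smul_left_injective K hv.2 (hpow.symm.trans (one_smul K v).symm)

theorem pow_apply_of_mem_eigenspace {f : End K V} {μ : K} {v : V} (hv : v ∈ f.eigenspace μ)
    (k : ℕ) : (f ^ k) v = μ ^ k • v := by
  obtain rfl | hv0 := eq_or_ne v 0
  · simp
  · exact HasEigenvector.pow_apply ⟨hv, hv0⟩ k

theorem trace_pow_eq_sum_eigenvalues [FiniteDimensional K V] [IsAlgClosed K] {f : End K V}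
    (hf : f.IsSemisimple) (k : ℕ) :
    LinearMap.trace K V (f ^ k) =
      ∑ μ ∈ f.finite_hasEigenvalue.toFinset, (finrank K (f.eigenspace μ) : K) * μ ^ k := by
  classical
  have hint : DirectSum.IsInternal f.eigenspace :=
    DirectSum.isInternal_submodule_of_iSupIndep_of_iSup_eq_top f.eigenspaces_iSupIndep
      hf.iSup_eigenspace_eq_top
  have hmaps (μ : K) : Set.MapsTo (f ^ k) (f.eigenspace μ) (f.eigenspace μ) := fun v hv => by
    rw [SetLike.mem_coe, pow_apply_of_mem_eigenspace hv]
    exact Submodule.smul_mem _ _ hv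
  rw [LinearMap.trace_eq_sum_trace_restrict' hint f.finite_hasEigenvalue hmaps]
  refine Finset.sum_congr rfl fun μ _ => ?_
  have hrestrict : (f ^ k).restrict (hmaps μ) = μ ^ k • LinearMap.id :=
    LinearMap.ext fun v => Subtype.ext (pow_apply_of_mem_eigenspace v.2 k)
  rw [hrestrict, map_smul, LinearMap.trace_id, smul_eq_mul, mul_comm]

end Module.End

theorem LinearMap.trace_eq_trace_restrict_add_trace_restrict {K V : Type*} [Field K]
    [AddCommGroup V] [Module K V] [FiniteDimensional K V] {U U' : Submodule K V}
    (h : IsCompl U U') (f : V →ₗ[K] V) (hU : Set.MapsTo f U U) (hU' : Set.MapsTo f U' U') :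
    trace K V f = trace K U (f.restrict hU) + trace K U' (f.restrict hU') := by
  let N : Bool → Submodule K V := fun b => cond b U U'
  have hint : DirectSum.IsInternal N :=
    (DirectSum.isInternal_submodule_iff_isCompl N (i := true) (j := false) (by simp)
      (by ext b; cases b <;> simp)).mpr h
  have hmaps : ∀ b, Set.MapsTo f (N b) (N b) := Bool.rec hU' hU
  rw [trace_eq_sum_trace_restrict hint hmaps, Fintype.sum_bool]
  rfl

theorem Complex.conj_eq_pow_pred_of_pow_eq_one {μ : ℂ} {n : ℕ} (hn : n ≠ 0) (hμ : μ ^ n = 1) :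
    conj μ = μ ^ (n - 1) := by
  rw [← Complex.inv_eq_conj (Complex.norm_eq_one_of_pow_eq_one hμ hn)]
  exact inv_eq_of_mul_eq_one_left (by rw [pow_sub_one_mul hn, hμ])

theorem IntermediateField.adjoin_rootsOfUnity_le_solvableByRad {F E : Type*} [Field F] [Field E]
    [Algebra F E] {n : ℕ} (hn : n ≠ 0) :
    adjoin F {z : E | z ^ n = 1} ≤ solvableByRad F E :=
  adjoin_le_iff.mpr fun _ hz => solvableByRad.rad_mem hn (by rw [hz]; exact one_mem _)

section FiniteOrder

variable {V : Type*} [AddCommGroup V] [Module ℂ V] [FiniteDimensional ℂ V] {f : End ℂ V}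
  {n : ℕ}

theorem LinearMap.trace_mem_adjoin_rootsOfUnity (hn : n ≠ 0) (hf : f ^ n = 1) :
    trace ℂ V f ∈ IntermediateField.adjoin ℚ {z : ℂ | z ^ n = 1} := by
  rw [← pow_one f, End.trace_pow_eq_sum_eigenvalues (End.isSemisimple_of_pow_eq_one hn hf)]
  refine sum_mem fun μ hμ => mul_mem (natCast_mem _ _) (pow_mem ?_ _)
  exact IntermediateField.subset_adjoin _ _
    ((Set.Finite.mem_toFinset _).mp hμ |>.pow_eq_one_of_pow_eq_one hf)

theorem LinearMap.trace_pow_pred_eq_conj_trace (hn : n ≠ 0) (hf : f ^ n = 1) :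
    trace ℂ V (f ^ (n - 1)) = conj (trace ℂ V f) := by
  have hss := End.isSemisimple_of_pow_eq_one hn hf
  have htrace := End.trace_pow_eq_sum_eigenvalues hss 1
  simp only [pow_one] at htrace
  rw [htrace, End.trace_pow_eq_sum_eigenvalues hss, map_sum]
  refine Finset.sum_congr rfl fun μ hμ => ?_
  rw [map_mul, map_natCast, Complex.conj_eq_pow_pred_of_pow_eq_one hn
    ((Set.Finite.mem_toFinset _).mp hμ |>.pow_eq_one_of_pow_eq_one hf)]

end FiniteOrder

section Subrepresentations

universe u v

variable {k V : Type u} {G : Type v} [Field k] [Monoid G] [AddCommGroup V] [Module k V]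
  (ρ : Representation k G V)

theorem Subrepresentation.finrank_lt [FiniteDimensional k V] {S : Subrepresentation ρ}
    (hS : S ≠ ⊤) : finrank k S.toSubmodule < finrank k V :=
  Submodule.finrank_lt fun h => hS (Subrepresentation.toSubmodule_injective h)

theorem Representation.IsIrreducible.nontrivial [ρ.IsIrreducible] : Nontrivial V := by
  by_contra h
  rw [not_nontrivial_iff_subsingleton] at h
  exact bot_ne_top (α := Subrepresentation ρ)
    (Subrepresentation.toSubmodule_injective (Subsingleton.elim _ _))

theorem Representation.exists_ne_bot_ne_top_of_not_isIrreducible [Nontrivial V]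
    (h : ¬ ρ.IsIrreducible) : ∃ S : Subrepresentation ρ, S ≠ ⊥ ∧ S ≠ ⊤ := by
  by_contra! hS
  refine h { toNontrivial := ⟨⊥, ⊤, fun hbot => ?_⟩, eq_bot_or_eq_top := fun S => ?_ }
  · exact bot_ne_top (congrArg Subrepresentation.toSubmodule hbot)
  · exact or_iff_not_imp_left.mpr (hS S)

theorem Representation.character_eq_add_of_isCompl [FiniteDimensional k V]
    {S T : Subrepresentation ρ} (h : IsCompl S T) :
    ρ.character = S.toRepresentation.character + T.toRepresentation.character := by
  have hsub : IsCompl S.toSubmodule T.toSubmodule :=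
    ⟨disjoint_iff.mpr (congrArg Subrepresentation.toSubmodule h.inf_eq_bot),
      codisjoint_iff.mpr (congrArg Subrepresentation.toSubmodule h.sup_eq_top)⟩
  funext g
  exact LinearMap.trace_eq_trace_restrict_add_trace_restrict hsub _
    (S.apply_mem_toSubmodule g) (T.apply_mem_toSubmodule g)

theorem FDRep.simple_of_isIrreducible [FiniteDimensional k V] [ρ.IsIrreducible] :
    Simple (FDRep.of ρ) := by
  have := IsIrreducible.nontrivial ρ
  refine ⟨fun {Y} f _ => ?_⟩
  let f' := ((forget₂ (FDRep k G) (Rep k G)).map f).hom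
  have hinj : Function.Injective f' :=
    (Rep.mono_iff_injective _).1 ((forget₂ (FDRep k G) (Rep k G)).map_mono f)
  have hne : Function.Surjective f' → f' ≠ 0 := fun hsurj hzero => by
    obtain ⟨v, hv⟩ := exists_ne (0 : V)
    obtain ⟨y, rfl⟩ := hsurj v
    exact hv (by rw [hzero]; rfl)
  rw [ConcreteCategory.isIso_iff_bijective, Ne,
    ← (forget₂ (FDRep k G) (Rep k G)).map_eq_zero_iff, Rep.hom_ext_iff]
  exact ⟨fun hbij => hne hbij.2,
    fun hzero => ⟨hinj, (IsIrreducible.surjective_or_eq_zero (ρ := ρ) f').resolve_right hzero⟩⟩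

end Subrepresentations

section Characters

variable {G : Type} [Group G] [Fintype G]

namespace Representation

theorem character_mem_span_isIrrChar {V : Type} [AddCommGroup V] [Module ℂ V]
    [FiniteDimensional ℂ V] (ρ : Representation ℂ G V) :
    ρ.character ∈ Submodule.span ℂ {χ | IsIrrChar G χ} := by
  induction h : finrank ℂ V using Nat.strong_induction_on generalizing V with
  | _ n ih =>
  by_cases hirr : ρ.IsIrreducible
  · exact Submodule.subset_span ⟨FDRep.of ρ, FDRep.simple_of_isIrreducible ρ, rfl⟩
  obtain hV | hV := subsingleton_or_nontrivial V
  · have hzero : ρ.character = 0 := funext fun g => by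
      rw [character, Subsingleton.elim (ρ g) 0, map_zero]
      rfl
    rw [hzero]
    exact zero_mem _
  obtain ⟨S, hS_bot, hS_top⟩ := exists_ne_bot_ne_top_of_not_isIrreducible ρ hirr
  obtain ⟨T, hST⟩ := exists_isCompl S
  have hT_top : T ≠ ⊤ := fun hT => hS_bot (eq_bot_of_isCompl_top (hT ▸ hST))
  rw [character_eq_add_of_isCompl ρ hST]
  exact add_mem (ih _ (h ▸ Subrepresentation.finrank_lt _ hS_top) _ rfl)
    (ih _ (h ▸ Subrepresentation.finrank_lt _ hT_top) _ rfl)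

variable {V : Type*} [AddCommGroup V] [Module ℂ V] (ρ : Representation ℂ G V)

theorem pow_card_eq_one (g : G) : ρ g ^ Fintype.card G = 1 := by
  rw [← map_pow, _root_.pow_card_eq_one, map_one]

variable [FiniteDimensional ℂ V]

theorem character_mem_adjoin_rootsOfUnity (g : G) :
    ρ.character g ∈ IntermediateField.adjoin ℚ {z : ℂ | z ^ Fintype.card G = 1} :=
  LinearMap.trace_mem_adjoin_rootsOfUnity Fintype.card_ne_zero (ρ.pow_card_eq_one g)

theorem character_inv (g : G) : ρ.character g⁻¹ = conj (ρ.character g) := by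
  have hinv : g ^ (Fintype.card G - 1) = g⁻¹ := eq_inv_of_mul_eq_one_left (by
    rw [pow_sub_one_mul Fintype.card_ne_zero, _root_.pow_card_eq_one])
  rw [character, character, ← hinv, map_pow,
    LinearMap.trace_pow_pred_eq_conj_trace Fintype.card_ne_zero (ρ.pow_card_eq_one g)]
end Representation

theorem innChar_character (V W : FDRep ℂ G) :
    innChar G V.character W.character =
      (Nat.card G : ℂ)⁻¹ * ∑ g : G, V.character g * W.character g⁻¹ := by
  simp only [innChar, Nat.card_eq_fintype_card]
  congr 1
  exact Finset.sum_congr rfl fun g _ =>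
    congrArg (V.character g * ·) (Representation.character_inv W.ρ g).symm

theorem innChar_self_of_isIrrChar {χ : G → ℂ} (hχ : IsIrrChar G χ) : innChar G χ χ = 1 := by
  obtain ⟨V, _, rfl⟩ := hχ
  classical
  rw [innChar_character, FDRep.char_orthonormal, if_pos ⟨Iso.refl V⟩]

theorem innChar_eq_zero_of_isIrrChar {χ ψ : G → ℂ} (hχ : IsIrrChar G χ) (hψ : IsIrrChar G ψ)
    (hne : χ ≠ ψ) : innChar G χ ψ = 0 := by
  obtain ⟨V, _, rfl⟩ := hχ
  obtain ⟨W, _, rfl⟩ := hψ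
  classical
  rw [innChar_character, FDRep.char_orthonormal, if_neg fun ⟨e⟩ => hne (FDRep.char_iso e)]

theorem innChar_add_left (φ₁ φ₂ ψ : G → ℂ) :
    innChar G (φ₁ + φ₂) ψ = innChar G φ₁ ψ + innChar G φ₂ ψ := by
  simp only [innChar, Pi.add_apply, add_mul, Finset.sum_add_distrib, mul_add]

theorem innChar_smul_left (c : ℂ) (φ ψ : G → ℂ) : innChar G (c • φ) ψ = c * innChar G φ ψ := by
  simp only [innChar, Pi.smul_apply, smul_eq_mul, mul_assoc, ← Finset.mul_sum, mul_left_comm]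

theorem sum_innChar_smul_eq_of_mem_span {Irr : Finset (G → ℂ)}
    (hIrr : ∀ χ, χ ∈ Irr ↔ IsIrrChar G χ) {φ : G → ℂ}
    (hφ : φ ∈ Submodule.span ℂ {χ | IsIrrChar G χ}) : ∑ χ ∈ Irr, innChar G φ χ • χ = φ := by
  induction hφ using Submodule.span_induction with
  | mem ψ hψ =>
    rw [Finset.sum_eq_single_of_mem ψ ((hIrr ψ).mpr hψ) fun χ hχ hne =>
      by rw [innChar_eq_zero_of_isIrrChar hψ ((hIrr χ).mp hχ) hne.symm, zero_smul],
      innChar_self_of_isIrrChar hψ, one_smul]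
  | zero => simp [innChar]
  | add φ₁ φ₂ _ _ h₁ h₂ => simp only [innChar_add_left, add_smul, Finset.sum_add_distrib, h₁, h₂]
  | smul c φ _ h => simp only [innChar_smul_left, mul_smul, ← Finset.smul_sum, h]

end Characters

namespace Matrix

variable {m n K : Type*} [Field K] [Fintype m] [DecidableEq m]

theorem isRoot_charpoly_of_mulVec_eq_smul {A : Matrix m m K} {v : m → K} {x : K} (hv : v ≠ 0)
    (hAv : A *ᵥ v = x • v) : A.charpoly.IsRoot x := by
  rw [IsRoot, eval_charpoly, ← exists_mulVec_eq_zero_iff]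
  exact ⟨v, hv, by
    rw [sub_mulVec, hAv, scalar_apply, ← smul_one_eq_diagonal, smul_mulVec, one_mulVec, sub_self]⟩

theorem exists_eq_of_isRoot_charpoly_of_mul_eq_mul_diagonal [Fintype n] [DecidableEq n]
    {A : Matrix m m K} {Q : Matrix m n K} {P : Matrix n m K} {d : n → K}
    (hAQ : A * Q = Q * diagonal d) (hQP : Q * P = 1) {x : K} (hx : A.charpoly.IsRoot x) :
    ∃ i, d i = x := by
  rw [IsRoot, eval_charpoly, ← exists_vecMul_eq_zero_iff] at hx
  obtain ⟨w, hw, hwA⟩ := hx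
  rw [vecMul_sub, scalar_apply, ← smul_one_eq_diagonal, vecMul_smul, vecMul_one,
    sub_eq_zero] at hwA
  have hu : w ᵥ* Q ≠ 0 := fun hu => hw (by
    rw [← vecMul_one w, ← hQP, ← vecMul_vecMul, hu, zero_vecMul])
  have huD : w ᵥ* Q ᵥ* diagonal d = x • (w ᵥ* Q) := by
    rw [vecMul_vecMul, ← hAQ, ← vecMul_vecMul, ← hwA, smul_vecMul]
  obtain ⟨i, hi⟩ := Function.ne_iff.mp hu
  refine ⟨i, mul_left_cancel₀ hi ?_⟩
  simpa [vecMul_diagonal, mul_comm] using congrFun huD i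

end Matrix

section McKay

open scoped Matrix MonoidalCategory

variable {G : Type} [Group G] [Fintype G] (Irr : Finset (G → ℂ))

noncomputable def characterTable : Matrix Irr G ℂ := Matrix.of fun χ g => (χ : G → ℂ) g

noncomputable def mckayMatrix (ρ : FDRep ℂ G) : Matrix Irr Irr ℂ :=
  Matrix.of fun χ ψ => innChar G (ρ.character * χ) ψ

variable {Irr} (hIrr : ∀ χ, χ ∈ Irr ↔ IsIrrChar G χ)
include hIrr

theorem characterTable_mul_conjTranspose [DecidableEq Irr] :
    characterTable Irr * (characterTable Irr)ᴴ = (Fintype.card G : ℂ) • 1 := by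
  ext χ ψ
  have hcard : (Fintype.card G : ℂ) ≠ 0 := Nat.cast_ne_zero.mpr Fintype.card_ne_zero
  have hinn :
      (characterTable Irr * (characterTable Irr)ᴴ) χ ψ = Fintype.card G * innChar G χ ψ := by
    rw [innChar, ← mul_assoc, mul_inv_cancel₀ hcard, one_mul]
    rfl
  rw [hinn, Matrix.smul_apply, Matrix.one_apply, smul_eq_mul]
  obtain rfl | hne := eq_or_ne χ ψ
  · rw [innChar_self_of_isIrrChar ((hIrr χ).mp χ.2), if_pos rfl]
  · rw [innChar_eq_zero_of_isIrrChar ((hIrr χ).mp χ.2) ((hIrr ψ).mp ψ.2)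
      (Subtype.coe_ne_coe.mpr hne), if_neg hne]

theorem mckayMatrix_mul_characterTable [DecidableEq G] (ρ : FDRep ℂ G) :
    mckayMatrix Irr ρ * characterTable Irr =
      characterTable Irr * Matrix.diagonal ρ.character := by
  ext χ g
  obtain ⟨V, _, hV⟩ := (hIrr χ).mp χ.2
  have hspan : ρ.character * χ ∈ Submodule.span ℂ {χ | IsIrrChar G χ} := by
    rw [← hV, ← FDRep.char_tensor]
    exact Representation.character_mem_span_isIrrChar (ρ ⊗ V).ρ
  rw [Matrix.mul_diagonal, Matrix.mul_apply, mul_comm]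
  calc ∑ ψ : Irr, mckayMatrix Irr ρ χ ψ * characterTable Irr ψ g
      = (∑ ψ ∈ Irr, innChar G (ρ.character * χ) ψ • ψ) g := by
        rw [Finset.sum_apply, ← Finset.sum_coe_sort Irr]
        rfl
    _ = ρ.character g * characterTable Irr χ g := by
        rw [sum_innChar_smul_eq_of_mem_span hIrr hspan]
        rfl

theorem exists_character_eq_of_isRoot_charpoly_mckayMatrix [DecidableEq Irr] (ρ : FDRep ℂ G)
    {x : ℂ} (hx : (mckayMatrix Irr ρ).charpoly.IsRoot x) : ∃ g, ρ.character g = x := by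
  classical
  have hcard : (Fintype.card G : ℂ) ≠ 0 := Nat.cast_ne_zero.mpr Fintype.card_ne_zero
  refine Matrix.exists_eq_of_isRoot_charpoly_of_mul_eq_mul_diagonal
    (mckayMatrix_mul_characterTable hIrr ρ)
    (P := (Fintype.card G : ℂ)⁻¹ • (characterTable Irr)ᴴ) ?_ hx
  rw [Matrix.mul_smul, characterTable_mul_conjTranspose hIrr, smul_smul, inv_mul_cancel₀ hcard,
    one_smul]

end McKay

/-- Every complex eigenvalue `x` of the McKay matrix `A_ρ(G)` lies in the cyclotomic field
generated over `ℚ` by the `|G|`-th roots of unity and is solvable by radicals over `ℚ`;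
moreover every root of the characteristic polynomial of `A_ρ(G)` is solvable by radicals,
i.e. the characteristic polynomial is solvable by radicals. -/
theorem mckay_matrix_eigenvalues_solvable_by_radicals (G : Type) [Group G] [Fintype G]
    [DecidableEq (G → ℂ)]
    (Irr : Finset (G → ℂ)) (hIrr : ∀ χ, χ ∈ Irr ↔ IsIrrChar G χ)
    (ρ : FDRep ℂ G) :
    (∀ x : ℂ,
      (∃ v : ↑Irr → ℂ, v ≠ 0 ∧
        (Matrix.of fun i j : ↑Irr => innChar G (ρ.character * ↑i) ↑j).mulVec v = x • v) →
      x ∈ IntermediateField.adjoin ℚ {z : ℂ | z ^ Fintype.card G = 1} ∧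
        x ∈ solvableByRad ℚ ℂ) ∧
    (∀ x : ℂ,
      (Matrix.of fun i j : ↑Irr => innChar G (ρ.character * ↑i) ↑j).charpoly.IsRoot x →
      x ∈ solvableByRad ℚ ℂ) := by
  have hsolvable := IntermediateField.adjoin_rootsOfUnity_le_solvableByRad (F := ℚ) (E := ℂ)
    (Fintype.card_ne_zero (α := G))
  have hcyclotomic (x : ℂ) (hx : (mckayMatrix Irr ρ).charpoly.IsRoot x) :
      x ∈ IntermediateField.adjoin ℚ {z : ℂ | z ^ Fintype.card G = 1} := by
    obtain ⟨g, rfl⟩ := exists_character_eq_of_isRoot_charpoly_mckayMatrix hIrr ρ hx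
    exact Representation.character_mem_adjoin_rootsOfUnity ρ.ρ g
  refine ⟨fun x ⟨v, hv, hAv⟩ => ?_, fun x hx => hsolvable (hcyclotomic x hx)⟩
  have hx := hcyclotomic x (Matrix.isRoot_charpoly_of_mulVec_eq_smul hv hAv)
  exact ⟨hx, hsolvable hx⟩
end
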